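/- In the flow network N_k constructed from a database D over R(A,B) with Δ = {A→B, B→A}, every minimum-cost integral maximum flow f satisfies cost(f) = w_D(D[f]), where D[f] ⊆ D is the set of facts R(a,b) whose edge (v_a, u_b) carries flow 1. -/

import Mathlib

attribute [local instance] Classical.propDecidable

open Finset

/-- Number of unordered pairs of distinct facts of `E` violating `viol`. -/
noncomputable def numVio {F : Type*} [DecidableEq F] (viol : F → F → Prop)
    (E : Finset F) : ℕ :=
  ((E.powersetCard 2).filter (fun p => ∀ f ∈ p, ∀ g ∈ p, f ≠ g → viol f g)).card

/-- Nodes of the flow network `N_k`: source `s`, auxiliary node `sp = s'`,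
sink `t`, left copies `vAi a i` and left block nodes `vA a`, right block nodes
`uB b` and right copies `uBi b i` (the index `i : Fin n` stands for `i+1`). -/
inductive FNode (α β : Type*) (n : ℕ) where
  | s | sp | t
  | vAi (a : α) (i : Fin n)
  | vA (a : α)
  | uB (b : β)
  | uBi (b : β) (i : Fin n)
  deriving DecidableEq, Fintype

variable {α β : Type*} [DecidableEq α] [DecidableEq β]

/-- `#_{D.A}(a)`, the number of facts of `D` with `A`-value `a`. -/
def cntA (D : Finset (α × β)) (a : α) : ℕ := (D.filter (fun f => f.1 = a)).card

/-- `#_{D.B}(b)`. -/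
def cntB (D : Finset (α × β)) (b : β) : ℕ := (D.filter (fun f => f.2 = b)).card

/-- Edge capacities of `N_k`: `(s,s')` has capacity `k`, all other edges capacity 1. -/
def capN (D : Finset (α × β)) (k : ℕ) :
    FNode α β D.card → FNode α β D.card → ℕ
  | .s, .sp => k
  | .sp, .vAi a i => if i.val < cntA D a then 1 else 0
  | .vAi a i, .vA a' => if a = a' ∧ i.val < cntA D a then 1 else 0
  | .vA a, .uB b => if (a, b) ∈ D then 1 else 0
  | .uB b, .uBi b' i => if b = b' ∧ i.val < cntB D b then 1 else 0
  | .uBi b i, .t => if i.val < cntB D b then 1 else 0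
  | _, _ => 0

/-- Edge costs of `N_k`: `(v_a^{i+1}, v_a)` costs `i·w₁`, `(v_a,u_b)` costs `−w f`
for the fact `f = (a,b)`, `(u_b, u_b^{i+1})` costs `i·w₂`; all other edges cost 0. -/
noncomputable def ecostN (D : Finset (α × β)) (w : α × β → ℚ) (w1 w2 : ℚ) :
    FNode α β D.card → FNode α β D.card → ℚ
  | .vAi a i, .vA a' => if a = a' then (i.val : ℚ) * w1 else 0
  | .vA a, .uB b => if (a, b) ∈ D then -w (a, b) else 0
  | .uB b, .uBi b' i => if b = b' then (i.val : ℚ) * w2 else 0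
  | _, _ => 0

/-- An integral flow on `N_k`: capacities respected and flow conserved at every
node other than the source and the sink. -/
def IsFlow [Fintype α] [Fintype β] (D : Finset (α × β)) (k : ℕ)
    (g : FNode α β D.card → FNode α β D.card → ℕ) : Prop :=
  (∀ u v, g u v ≤ capN D k u v) ∧
  (∀ v : FNode α β D.card, v ≠ FNode.s → v ≠ FNode.t →
    (∑ u, g u v) = ∑ u, g v u)

/-- The value of a flow. -/
def flowValue [Fintype α] [Fintype β] {n : ℕ}
    (g : FNode α β n → FNode α β n → ℕ) : ℕ :=
  ∑ v, g FNode.s v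

/-- The cost of a flow: `Σ_e g(e)·c(e)`. -/
noncomputable def flowCost [Fintype α] [Fintype β] (D : Finset (α × β))
    (w : α × β → ℚ) (w1 w2 : ℚ)
    (g : FNode α β D.card → FNode α β D.card → ℕ) : ℚ :=
  ∑ u, ∑ v, (g u v : ℚ) * ecostN D w w1 w2 u v

/-- `w_D(E)` for `Δ = {A→B, B→A}` with weights `w₁, w₂`. -/
noncomputable def wDAB (w : α × β → ℚ) (w1 w2 : ℚ) (E : Finset (α × β)) : ℚ :=
  (∑ f ∈ E, -(w f)) +
    w1 * (numVio (fun f g => f.1 = g.1 ∧ f.2 ≠ g.2) E : ℚ) +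
    w2 * (numVio (fun f g => f.2 = g.2 ∧ f.1 ≠ g.1) E : ℚ)

/-- The flow `f_E` induced by a subset `E ⊆ D`. -/
def fE (D E : Finset (α × β)) :
    FNode α β D.card → FNode α β D.card → ℕ
  | .s, .sp => E.card
  | .sp, .vAi a i => if i.val < cntA E a then 1 else 0
  | .vAi a i, .vA a' => if a = a' ∧ i.val < cntA E a then 1 else 0
  | .vA a, .uB b => if (a, b) ∈ E then 1 else 0
  | .uB b, .uBi b' i => if b = b' ∧ i.val < cntB E b then 1 else 0
  | .uBi b i, .t => if i.val < cntB E b then 1 else 0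
  | _, _ => 0

/-- The subset `D[g] ⊆ D` induced by a flow `g`: the facts `(a,b)` whose edge
`(v_a, u_b)` carries one unit of flow. -/
def Dof (D : Finset (α × β)) {n : ℕ} (g : FNode α β n → FNode α β n → ℕ) :
    Finset (α × β) :=
  D.filter (fun f => g (FNode.vA f.1) (FNode.uB f.2) = 1)

/-!
Write `E = D[g]`. By conservation, the flow entering `v_a` equals the number `ℓ` of facts of
`E` with `A`-value `a`, and it arrives over `ℓ` distinct unit edges `(v_a^{i+1}, v_a)` of cost
`i·w₁`. The cheapest choice costs `(0 + 1 + ⋯ + (ℓ-1))·w₁ = C(ℓ, 2)·w₁`, and `C(ℓ, 2)` is the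
number of `A → B` violations among these facts; symmetrically on the `B` side. Hence
`cost g ≥ w_D(E)`. Conversely the flow `fE D E`, which uses exactly the cheapest parallel
edges, has the same value `|E|` and cost `w_D(E)`, so minimality of `g` gives equality.
-/

theorem numVio_eq_sum_choose_two {ι γ : Type*} [DecidableEq ι] [Fintype γ] [DecidableEq γ]
    (E : Finset ι) (key : ι → γ) :
    numVio (fun f g => key f = key g ∧ f ≠ g) E = ∑ c, (#{f ∈ E | key f = c}).choose 2 := by
  have hpairs : {p ∈ E.powersetCard 2 | ∀ f ∈ p, ∀ g ∈ p, f ≠ g → key f = key g ∧ f ≠ g}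
      = univ.biUnion fun c => powersetCard 2 {f ∈ E | key f = c} := by
    ext p
    simp only [mem_filter, mem_powersetCard, mem_biUnion, mem_univ, true_and]
    constructor
    · rintro ⟨⟨hpE, hp2⟩, hkey⟩
      obtain ⟨f, g, hfg, rfl⟩ := card_eq_two.mp hp2
      refine ⟨key f, fun x hx => ?_, hp2⟩
      rcases mem_insert.mp hx with rfl | hx
      · exact mem_filter.mpr ⟨hpE (mem_insert_self _ _), rfl⟩
      · rw [mem_singleton.mp hx]
        exact mem_filter.mpr ⟨hpE (by simp), (hkey f (by simp) g (by simp) hfg).1.symm⟩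
    · rintro ⟨c, hpc, hp2⟩
      refine ⟨⟨hpc.trans (filter_subset _ _), hp2⟩, fun f hf g hg hfg => ⟨?_, hfg⟩⟩
      exact (mem_filter.mp (hpc hf)).2.trans (mem_filter.mp (hpc hg)).2.symm
  rw [numVio, hpairs, card_biUnion]
  · simp only [card_powersetCard]
  · intro c _ c' _ hcc'
    refine disjoint_left.mpr fun p hp hp' => ?_
    obtain ⟨f, hf⟩ := card_pos.mp ((mem_powersetCard.mp hp).2.symm ▸ two_pos)
    exact hcc' ((mem_filter.mp ((mem_powersetCard.mp hp).1 hf)).2.symm.trans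
      (mem_filter.mp ((mem_powersetCard.mp hp').1 hf)).2)

theorem numVio_fst_eq [Fintype α] (E : Finset (α × β)) :
    numVio (fun f g => f.1 = g.1 ∧ f.2 ≠ g.2) E = ∑ a, (cntA E a).choose 2 := by
  have hviol : (fun f g : α × β => f.1 = g.1 ∧ f.2 ≠ g.2) = fun f g => f.1 = g.1 ∧ f ≠ g := by
    ext f g
    exact and_congr_right fun h => not_congr ⟨fun h2 => Prod.ext h h2, congrArg Prod.snd⟩
  simp [hviol, numVio_eq_sum_choose_two, cntA]

theorem numVio_snd_eq [Fintype β] (E : Finset (α × β)) :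
    numVio (fun f g => f.2 = g.2 ∧ f.1 ≠ g.1) E = ∑ b, (cntB E b).choose 2 := by
  have hviol : (fun f g : α × β => f.2 = g.2 ∧ f.1 ≠ g.1) = fun f g => f.2 = g.2 ∧ f ≠ g := by
    ext f g
    exact and_congr_right fun h => not_congr ⟨fun h1 => Prod.ext h1 h, congrArg Prod.fst⟩
  simp [hviol, numVio_eq_sum_choose_two, cntB]

theorem wDAB_eq [Fintype α] [Fintype β] (w : α × β → ℚ) (w1 w2 : ℚ) (E : Finset (α × β)) :
    wDAB w w1 w2 E = ∑ f ∈ E, -w f + (∑ a, ((cntA E a).choose 2 : ℚ)) * w1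
      + (∑ b, ((cntB E b).choose 2 : ℚ)) * w2 := by
  rw [wDAB, numVio_fst_eq, numVio_snd_eq]
  push_cast
  ring

theorem sum_ite_mem_eq_cntA [Fintype β] (E : Finset (α × β)) (a : α) :
    ∑ b, (if (a, b) ∈ E then 1 else 0) = cntA E a := by
  rw [sum_boole, cntA, Nat.cast_id]
  refine card_nbij (a, ·) (fun b hb => by simpa using hb) (fun _ _ _ _ h => (Prod.mk.inj h).2) ?_
  rintro ⟨a', b⟩ hf
  simp only [coe_filter] at hf
  obtain ⟨hab, rfl⟩ := hf
  exact ⟨b, by simpa using hab, rfl⟩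

theorem sum_ite_mem_eq_cntB [Fintype α] (E : Finset (α × β)) (b : β) :
    ∑ a, (if (a, b) ∈ E then 1 else 0) = cntB E b := by
  rw [sum_boole, cntB, Nat.cast_id]
  refine card_nbij (·, b) (fun a ha => by simpa using ha) (fun _ _ _ _ h => (Prod.mk.inj h).1) ?_
  rintro ⟨a, b'⟩ hf
  simp only [coe_filter] at hf
  obtain ⟨hab, rfl⟩ := hf
  exact ⟨a, by simpa using hab, rfl⟩

omit [DecidableEq β] in
theorem sum_cntA [Fintype α] (E : Finset (α × β)) : ∑ a, cntA E a = #E :=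
  (card_eq_sum_card_fiberwise fun _ _ => mem_univ _).symm

omit [DecidableEq α] in
theorem sum_cntB [Fintype β] (E : Finset (α × β)) : ∑ b, cntB E b = #E :=
  (card_eq_sum_card_fiberwise fun _ _ => mem_univ _).symm

theorem choose_card_two_le_sum (S : Finset ℕ) : (#S).choose 2 ≤ ∑ i ∈ S, i := by
  induction S using Finset.induction_on_max with
  | empty => simp
  | insert m S hlt ih =>
    have hm : #S ≤ m := by simpa using card_le_card fun x hx => mem_range.mpr (hlt x hx)
    have hmS : m ∉ S := fun h => (hlt m h).false
    rw [card_insert_of_notMem hmS, sum_insert hmS, Nat.choose_succ_left _ _ two_pos,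
      show 2 - 1 = 1 from rfl, Nat.choose_one_right]
    omega

theorem choose_sum_two_le_sum_mul_val {n : ℕ} (x : Fin n → ℕ) (hx : ∀ i, x i ≤ 1) :
    (∑ i, x i).choose 2 ≤ ∑ i, x i * i := by
  set S : Finset (Fin n) := {i | x i = 1}
  have hxS : ∀ i, x i = if i ∈ S then 1 else 0 := fun i => by
    have := hx i
    by_cases h : x i = 1 <;> simp [S, h]; omega
  simp only [hxS, sum_boole, boole_mul, ← sum_filter, Nat.cast_id]
  simpa [S] using choose_card_two_le_sum (S.map Fin.valEmbedding)

theorem sum_ite_val_lt {n m : ℕ} (hm : m ≤ n) :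
    ∑ i : Fin n, (if i.val < m then 1 else 0) = m := by
  simp [sum_boole, Fin.card_filter_val_lt, hm]

theorem sum_ite_val_lt_mul_val {n m : ℕ} (hm : m ≤ n) :
    ∑ i : Fin n, (if i.val < m then 1 else 0) * i.val = m.choose 2 := by
  rw [Fin.sum_univ_eq_sum_range (fun i => (if i < m then 1 else 0) * i), Nat.choose_two_right,
    ← sum_range_id]
  simp only [boole_mul]
  rw [← sum_filter]
  congr 1
  ext i
  simp only [mem_filter, mem_range]
  omega

def fnodeEquiv (α β : Type*) (n : ℕ) :
    FNode α β n ≃ Unit ⊕ Unit ⊕ Unit ⊕ (α × Fin n) ⊕ α ⊕ β ⊕ (β × Fin n) where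
  toFun
    | .s => .inl ()
    | .sp => .inr (.inl ())
    | .t => .inr (.inr (.inl ()))
    | .vAi a i => .inr (.inr (.inr (.inl (a, i))))
    | .vA a => .inr (.inr (.inr (.inr (.inl a))))
    | .uB b => .inr (.inr (.inr (.inr (.inr (.inl b)))))
    | .uBi b i => .inr (.inr (.inr (.inr (.inr (.inr (b, i))))))
  invFun
    | .inl () => .s
    | .inr (.inl ()) => .sp
    | .inr (.inr (.inl ())) => .t
    | .inr (.inr (.inr (.inl (a, i)))) => .vAi a i
    | .inr (.inr (.inr (.inr (.inl a)))) => .vA a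
    | .inr (.inr (.inr (.inr (.inr (.inl b))))) => .uB b
    | .inr (.inr (.inr (.inr (.inr (.inr (b, i)))))) => .uBi b i
  left_inv v := by cases v <;> rfl
  right_inv x := by rcases x with _ | _ | _ | ⟨a, i⟩ | _ | _ | ⟨b, i⟩ <;> rfl

theorem FNode.sum_univ {A B M : Type*} [Fintype A] [Fintype B] [AddCommMonoid M] {n : ℕ}
    (f : FNode A B n → M) :
    ∑ v, f v = f .s + f .sp + f .t + ∑ a, ∑ i, f (.vAi a i) + ∑ a, f (.vA a)
      + ∑ b, f (.uB b) + ∑ b, ∑ i, f (.uBi b i) := by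
  rw [← (fnodeEquiv A B n).symm.sum_comp f]
  simp [Fintype.sum_sum_type, Fintype.sum_prod_type, fnodeEquiv, add_assoc]

theorem flowCost_eq_of_middle [Fintype α] [Fintype β] {D E : Finset (α × β)} (hE : E ⊆ D)
    (w : α × β → ℚ) (w1 w2 : ℚ) {g : FNode α β D.card → FNode α β D.card → ℕ}
    (hmid : ∀ a b, g (.vA a) (.uB b) = if (a, b) ∈ E then 1 else 0) :
    flowCost D w w1 w2 g = ∑ f ∈ E, -w f
      + (∑ a, ((∑ i, g (.vAi a i) (.vA a) * i.val : ℕ) : ℚ)) * w1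
      + (∑ b, ((∑ i, g (.uB b) (.uBi b i) * i.val : ℕ) : ℚ)) * w2 := by
  have hmiddle : ∑ a, ∑ b, (if (a, b) ∈ D then -if (a, b) ∈ E then w (a, b) else 0 else 0)
      = -∑ f ∈ E, w f := by
    have hsummand : ∀ f : α × β,
        (if f ∈ D then -if f ∈ E then w f else 0 else 0) = -if f ∈ E then w f else 0 := fun f => by
      by_cases hf : f ∈ E
      · simp [hf, hE hf]
      · simp [hf]
    rw [← Fintype.sum_prod_type' (f := fun a b => if (a, b) ∈ D then _ else _)]
    simp only [hsummand, sum_neg_distrib, sum_ite_mem, univ_inter]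
  simp [flowCost, FNode.sum_univ, ecostN, mul_ite, hmid, hmiddle, sum_mul, mul_assoc]
  ring

section Capacity

variable {D : Finset (α × β)} {k : ℕ} {g : FNode α β D.card → FNode α β D.card → ℕ}

theorem eq_zero_of_capN_eq_zero (hcap : ∀ u v, g u v ≤ capN D k u v) (u v)
    (h : capN D k u v = 0) : g u v = 0 :=
  Nat.le_zero.mp (h ▸ hcap u v)

variable [Fintype α] [Fintype β] (hcap : ∀ u v, g u v ≤ capN D k u v)
include hcap

theorem flowValue_eq_of_le_capN : flowValue g = g .s .sp := by
  simp [flowValue, FNode.sum_univ, eq_zero_of_capN_eq_zero hcap, capN.eq_def]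

theorem sum_in_sp : ∑ u, g u .sp = g .s .sp := by
  simp [FNode.sum_univ, eq_zero_of_capN_eq_zero hcap, capN.eq_def]

theorem sum_out_sp : ∑ v, g .sp v = ∑ a, ∑ i, g .sp (.vAi a i) := by
  simp [FNode.sum_univ, eq_zero_of_capN_eq_zero hcap, capN.eq_def]

theorem sum_in_vAi (a i) : ∑ u, g u (.vAi a i) = g .sp (.vAi a i) := by
  simp [FNode.sum_univ, eq_zero_of_capN_eq_zero hcap, capN.eq_def]

theorem sum_out_vAi (a i) : ∑ v, g (.vAi a i) v = g (.vAi a i) (.vA a) := by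
  simp [FNode.sum_univ, eq_zero_of_capN_eq_zero hcap, capN.eq_def]
  exact Fintype.sum_eq_single a fun a' ha' =>
    eq_zero_of_capN_eq_zero hcap _ _ (by simp [capN, Ne.symm ha'])

theorem sum_in_vA (a) : ∑ u, g u (.vA a) = ∑ i, g (.vAi a i) (.vA a) := by
  simp [FNode.sum_univ, eq_zero_of_capN_eq_zero hcap, capN.eq_def]
  exact Fintype.sum_eq_single a fun a' ha' => sum_eq_zero fun i _ =>
    eq_zero_of_capN_eq_zero hcap _ _ (by simp [capN, ha'])

theorem sum_out_vA (a) : ∑ v, g (.vA a) v = ∑ b, g (.vA a) (.uB b) := by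
  simp [FNode.sum_univ, eq_zero_of_capN_eq_zero hcap, capN.eq_def]

theorem sum_in_uB (b) : ∑ u, g u (.uB b) = ∑ a, g (.vA a) (.uB b) := by
  simp [FNode.sum_univ, eq_zero_of_capN_eq_zero hcap, capN.eq_def]

theorem sum_out_uB (b) : ∑ v, g (.uB b) v = ∑ i, g (.uB b) (.uBi b i) := by
  simp [FNode.sum_univ, eq_zero_of_capN_eq_zero hcap, capN.eq_def]
  exact Fintype.sum_eq_single b fun b' hb' => sum_eq_zero fun i _ =>
    eq_zero_of_capN_eq_zero hcap _ _ (by simp [capN, Ne.symm hb'])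

theorem sum_in_uBi (b i) : ∑ u, g u (.uBi b i) = g (.uB b) (.uBi b i) := by
  simp [FNode.sum_univ, eq_zero_of_capN_eq_zero hcap, capN.eq_def]
  exact Fintype.sum_eq_single b fun b' hb' =>
    eq_zero_of_capN_eq_zero hcap _ _ (by simp [capN, hb'])

theorem sum_out_uBi (b i) : ∑ v, g (.uBi b i) v = g (.uBi b i) .t := by
  simp [FNode.sum_univ, eq_zero_of_capN_eq_zero hcap, capN.eq_def]

end Capacity

section Flow

variable [Fintype α] [Fintype β] {D : Finset (α × β)} {k : ℕ}
  {g : FNode α β D.card → FNode α β D.card → ℕ}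

theorem IsFlow.apply_vA_uB (hg : IsFlow D k g) (a : α) (b : β) :
    g (.vA a) (.uB b) = if (a, b) ∈ Dof D g then 1 else 0 := by
  have hle := hg.1 (.vA a) (.uB b)
  by_cases hD : (a, b) ∈ D
  · simp only [capN, hD, if_true] at hle
    by_cases h1 : g (.vA a) (.uB b) = 1 <;> simp [Dof, hD, h1]; omega
  · simp only [capN, hD, if_false, Nat.le_zero] at hle
    simp [Dof, hD, hle]

theorem IsFlow.sum_vAi_vA (hg : IsFlow D k g) (a : α) :
    ∑ i, g (.vAi a i) (.vA a) = cntA (Dof D g) a := by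
  rw [← sum_in_vA hg.1, hg.2 _ (by simp) (by simp), sum_out_vA hg.1]
  simp only [hg.apply_vA_uB, sum_ite_mem_eq_cntA]

theorem IsFlow.sum_uB_uBi (hg : IsFlow D k g) (b : β) :
    ∑ i, g (.uB b) (.uBi b i) = cntB (Dof D g) b := by
  rw [← sum_out_uB hg.1, ← hg.2 _ (by simp) (by simp), sum_in_uB hg.1]
  simp only [hg.apply_vA_uB, sum_ite_mem_eq_cntB]

theorem IsFlow.flowValue_eq_card_Dof (hg : IsFlow D k g) : flowValue g = #(Dof D g) := by
  have hvAi : ∀ a i, g .sp (.vAi a i) = g (.vAi a i) (.vA a) := fun a i => by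
    rw [← sum_in_vAi hg.1, hg.2 _ (by simp) (by simp), sum_out_vAi hg.1]
  rw [flowValue_eq_of_le_capN hg.1, ← sum_in_sp hg.1, hg.2 _ (by simp) (by simp),
    sum_out_sp hg.1]
  simp only [hvAi, hg.sum_vAi_vA, sum_cntA]

theorem IsFlow.wDAB_Dof_le_flowCost (hg : IsFlow D k g) (w : α × β → ℚ) {w1 w2 : ℚ}
    (h1 : 0 ≤ w1) (h2 : 0 ≤ w2) : wDAB w w1 w2 (Dof D g) ≤ flowCost D w w1 w2 g := by
  have hle_one : ∀ u v : FNode α β D.card, capN D k u v ≤ 1 → g u v ≤ 1 := fun u v h =>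
    (hg.1 u v).trans h
  rw [wDAB_eq, flowCost_eq_of_middle (filter_subset _ _) w w1 w2 hg.apply_vA_uB]
  refine add_le_add (add_le_add le_rfl (mul_le_mul_of_nonneg_right
    (sum_le_sum fun a _ => Nat.cast_le.mpr ?_) h1)) (mul_le_mul_of_nonneg_right
    (sum_le_sum fun b _ => Nat.cast_le.mpr ?_) h2)
  · rw [← hg.sum_vAi_vA]
    exact choose_sum_two_le_sum_mul_val _ fun i =>
      hle_one _ _ (by simp only [capN]; split <;> omega)
  · rw [← hg.sum_uB_uBi]
    exact choose_sum_two_le_sum_mul_val _ fun i =>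
      hle_one _ _ (by simp only [capN]; split <;> omega)

end Flow

section CanonicalFlow

variable {D E : Finset (α × β)}

omit [DecidableEq β] in
theorem cntA_le_card (hE : E ⊆ D) (a : α) : cntA E a ≤ #D :=
  (card_filter_le _ _).trans (card_le_card hE)

omit [DecidableEq α] in
theorem cntB_le_card (hE : E ⊆ D) (b : β) : cntB E b ≤ #D :=
  (card_filter_le _ _).trans (card_le_card hE)

theorem fE_le_capN (hE : E ⊆ D) {k : ℕ} (hk : #E ≤ k) (u v : FNode α β #D) :
    fE D E u v ≤ capN D k u v := by
  have hA : ∀ a, cntA E a ≤ cntA D a := fun a => card_le_card (filter_subset_filter _ hE)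
  have hB : ∀ b, cntB E b ≤ cntB D b := fun b => card_le_card (filter_subset_filter _ hE)
  have hmono {p q : Prop} [Decidable p] [Decidable q] (h : p → q) :
      (if p then 1 else 0) ≤ if q then 1 else 0 := by
    split_ifs <;> simp_all
  rcases u with _ | _ | _ | ⟨a, i⟩ | a | b | ⟨b, i⟩ <;>
    rcases v with _ | _ | _ | ⟨a', i'⟩ | a' | b' | ⟨b', i'⟩ <;>
    simp only [fE, capN, le_refl, hk]
  · exact hmono fun h => h.trans_le (hA a')
  · exact hmono (And.imp_right fun h => h.trans_le (hA a))
  · exact hmono fun h => hE h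
  · exact hmono (And.imp_right fun h => h.trans_le (hB b))
  · exact hmono fun h => h.trans_le (hB b)

variable [Fintype α] [Fintype β]

theorem isFlow_fE (hE : E ⊆ D) {k : ℕ} (hk : #E ≤ k) : IsFlow D k (fE D E) := by
  have hcap := fE_le_capN hE hk
  refine ⟨hcap, ?_⟩
  rintro (_ | _ | _ | ⟨a, i⟩ | a | b | ⟨b, i⟩) hs ht
  · exact absurd rfl hs
  · rw [sum_in_sp hcap, sum_out_sp hcap]
    simp only [fE, sum_ite_val_lt (cntA_le_card hE _), sum_cntA]
  · exact absurd rfl ht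
  · rw [sum_in_vAi hcap, sum_out_vAi hcap]
    simp [fE]
  · rw [sum_in_vA hcap, sum_out_vA hcap]
    simp only [fE, true_and, sum_ite_val_lt (cntA_le_card hE _), sum_ite_mem_eq_cntA]
  · rw [sum_in_uB hcap, sum_out_uB hcap]
    simp only [fE, true_and, sum_ite_val_lt (cntB_le_card hE _), sum_ite_mem_eq_cntB]
  · rw [sum_in_uBi hcap, sum_out_uBi hcap]
    simp [fE]

theorem flowValue_fE (hE : E ⊆ D) : flowValue (fE D E) = #E := by
  rw [flowValue_eq_of_le_capN (fE_le_capN hE le_rfl)]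
  rfl

theorem flowCost_fE (hE : E ⊆ D) (w : α × β → ℚ) (w1 w2 : ℚ) :
    flowCost D w w1 w2 (fE D E) = wDAB w w1 w2 E := by
  rw [flowCost_eq_of_middle hE w w1 w2 fun a b => rfl, wDAB_eq]
  simp only [fE, true_and, sum_ite_val_lt_mul_val (cntA_le_card hE _),
    sum_ite_val_lt_mul_val (cntB_le_card hE _)]

end CanonicalFlow

theorem min_cost_max_flow_cost_eq_general [Fintype α] [Fintype β]
    (D : Finset (α × β)) (k : ℕ) (w : α × β → ℚ) (w1 w2 : ℚ)
    (h1 : 0 ≤ w1) (h2 : 0 ≤ w2)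
    (g : FNode α β D.card → FNode α β D.card → ℕ)
    (hg : IsFlow D k g)
    (hmin : ∀ g', IsFlow D k g' → flowValue g' = flowValue g →
      flowCost D w w1 w2 g ≤ flowCost D w w1 w2 g') :
    flowCost D w w1 w2 g = wDAB w w1 w2 (Dof D g) := by
  have hE : Dof D g ⊆ D := filter_subset _ _
  have hk : #(Dof D g) ≤ k := by
    rw [← hg.flowValue_eq_card_Dof, flowValue_eq_of_le_capN hg.1]
    exact hg.1 .s .sp
  refine le_antisymm ?_ (hg.wDAB_Dof_le_flowCost w h1 h2)
  calc flowCost D w w1 w2 g ≤ flowCost D w w1 w2 (fE D (Dof D g)) :=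
        hmin _ (isFlow_fE hE hk) (by rw [flowValue_fE hE, hg.flowValue_eq_card_Dof])
    _ = wDAB w w1 w2 (Dof D g) := flowCost_fE hE w w1 w2

/-- Lemma 2 of the paper: every minimum-cost integral maximum flow `g` of `N_k`
satisfies `cost(g) = w_D(D[g])`. -/
theorem min_cost_max_flow_cost_eq [Fintype α] [Fintype β]
    (D : Finset (α × β)) (k : ℕ) (w : α × β → ℚ) (w1 w2 : ℚ)
    (hw : ∀ f ∈ D, 0 ≤ w f) (h1 : 0 ≤ w1) (h2 : 0 ≤ w2)
    (g : FNode α β D.card → FNode α β D.card → ℕ)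
    (hg : IsFlow D k g)
    (hmax : ∀ g', IsFlow D k g' → flowValue g' ≤ flowValue g)
    (hmin : ∀ g', IsFlow D k g' → flowValue g' = flowValue g →
      flowCost D w w1 w2 g ≤ flowCost D w w1 w2 g') :
    flowCost D w w1 w2 g = wDAB w w1 w2 (Dof D g) :=
  min_cost_max_flow_cost_eq_general D k w w1 w2 h1 h2 g hg hmin
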